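/- Let W and W' be walks in the tensor product G × H with W ~ W' (square-equivalence in G × H). Then the projections satisfy W|_G ~ W'|_G in G and W|_H ~ W'|_H in H. -/

import Mathlib

open SimpleGraph

variable {α β γ : Type*}

/-- Tensor (categorical) product of simple graphs. -/
def tensor (G : SimpleGraph α) (H : SimpleGraph β) : SimpleGraph (α × β) where
  Adj x y := G.Adj x.1 y.1 ∧ H.Adj x.2 y.2
  symm := ⟨fun _ _ ⟨h1, h2⟩ => ⟨h1.symm, h2.symm⟩⟩
  loopless := ⟨fun x ⟨h1, _⟩ => G.irrefl h1⟩

/-- Projection of a walk in the tensor product to the first factor. -/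
def projG {G : SimpleGraph α} {H : SimpleGraph β} :
    ∀ {x y : α × β}, (tensor G H).Walk x y → G.Walk x.1 y.1
  | _, _, SimpleGraph.Walk.nil => SimpleGraph.Walk.nil
  | _, _, SimpleGraph.Walk.cons h p => SimpleGraph.Walk.cons (show G.Adj _ _ ∧ H.Adj _ _ from h).1 (projG p)

/-- Projection of a walk in the tensor product to the second factor. -/
def projH {G : SimpleGraph α} {H : SimpleGraph β} :
    ∀ {x y : α × β}, (tensor G H).Walk x y → H.Walk x.2 y.2
  | _, _, SimpleGraph.Walk.nil => SimpleGraph.Walk.nil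
  | _, _, SimpleGraph.Walk.cons h p => SimpleGraph.Walk.cons (show G.Adj _ _ ∧ H.Adj _ _ from h).2 (projH p)

/-- One-step reduction: deleting a consecutive backtracking pair `e, e⁻¹`. -/
inductive RedStep (G : SimpleGraph α) : ∀ {u v : α}, G.Walk u v → G.Walk u v → Prop
  | cancel {u v a b : α} (h : G.Adj a b) (p : G.Walk u a) (q : G.Walk a v) :
      RedStep G (p.append (SimpleGraph.Walk.cons h (SimpleGraph.Walk.cons h.symm q)))
        (p.append q)

/-- A walk is reduced if no backtracking cancellation applies to it. -/
def Reduced {G : SimpleGraph α} {u v : α} (W : G.Walk u v) : Prop :=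
  ∀ W', ¬ RedStep G W W'

/-- Homotopy of walks: equivalence generated by cancellations. -/
def RedEquiv (G : SimpleGraph α) {u v : α} (W W' : G.Walk u v) : Prop :=
  Relation.EqvGen (fun p q => RedStep G p q) W W'

/-- One elementary step of square-equivalence. -/
inductive SqStep (G : SimpleGraph α) : ∀ {u v : α}, G.Walk u v → G.Walk u v → Prop
  | cancel {u v a b : α} (h : G.Adj a b) (p : G.Walk u a) (q : G.Walk a v) :
      SqStep G (p.append (SimpleGraph.Walk.cons h (SimpleGraph.Walk.cons h.symm q)))
        (p.append q)
  | square {u v a b c d : α} (hab : G.Adj a b) (hbc : G.Adj b c) (had : G.Adj a d)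
      (hdc : G.Adj d c) (p : G.Walk u a) (q : G.Walk c v) :
      SqStep G (p.append (SimpleGraph.Walk.cons hab (SimpleGraph.Walk.cons hbc q)))
        (p.append (SimpleGraph.Walk.cons had (SimpleGraph.Walk.cons hdc q)))

/-- Square-equivalence of walks. -/
def SqEquiv (G : SimpleGraph α) {u v : α} (W W' : G.Walk u v) : Prop :=
  Relation.EqvGen (fun p q => SqStep G p q) W W'

/-- Natural-number power of a closed walk (iterated concatenation). -/
def wpow {G : SimpleGraph α} {u : α} (W : G.Walk u u) : ℕ → G.Walk u u
  | 0 => SimpleGraph.Walk.nil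
  | n + 1 => W.append (wpow W n)

/-- Integer power of a closed walk. -/
def wzpow {G : SimpleGraph α} {u : α} (W : G.Walk u u) : ℤ → G.Walk u u
  | Int.ofNat n => wpow W n
  | Int.negSucc n => wpow W.reverse (n + 1)

/-- A walk `p` is a prefix of `q` (same starting vertex). -/
def WalkPrefix {G : SimpleGraph α} {u x y : α} (p : G.Walk u x) (q : G.Walk u y) : Prop :=
  ∃ r : G.Walk x y, q = p.append r

/-- `K` is square-free: every square is trivial. -/
def SqFree (K : SimpleGraph γ) : Prop :=
  ∀ a b c d : γ, K.Adj a b → K.Adj b c → K.Adj c d → K.Adj d a → a = c ∨ b = d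

/-- The circular clique `K_{p/q}` on `ZMod p`. -/
def circClique (p q : ℕ) : SimpleGraph (ZMod p) where
  Adj i j := i ≠ j ∧ ∃ k : ℕ, q ≤ k ∧ k ≤ p - q ∧ (j = i + (k : ZMod p) ∨ i = j + (k : ZMod p))
  symm := by
    constructor
    rintro i j ⟨hne, k, h1, h2, h3 | h3⟩
    · exact ⟨hne.symm, k, h1, h2, Or.inr h3⟩
    · exact ⟨hne.symm, k, h1, h2, Or.inl h3⟩
  loopless := ⟨fun i h => h.1 rfl⟩

/-!
Both projections of `tensor G H` are graph homomorphisms, and the image of a walk under any graph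
homomorphism turns a backtrack into a backtrack and a square into a (possibly degenerate) square, so
homomorphisms preserve square-equivalence.
-/

section map

variable {G : SimpleGraph α} {G' : SimpleGraph β}

theorem SqStep.map (f : G →g G') {u v : α} {W W' : G.Walk u v} (h : SqStep G W W') :
    SqStep G' (W.map f) (W'.map f) := by
  cases h with
  | cancel h p q =>
    simpa only [Walk.map_append, Walk.map_cons] using SqStep.cancel (f.map_adj h) (p.map f) (q.map f)
  | square hab hbc had hdc p q =>
    simpa only [Walk.map_append, Walk.map_cons] using
      SqStep.square (f.map_adj hab) (f.map_adj hbc) (f.map_adj had) (f.map_adj hdc) (p.map f) (q.map f)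

theorem SqEquiv.map (f : G →g G') {u v : α} {W W' : G.Walk u v} (h : SqEquiv G W W') :
    SqEquiv G' (W.map f) (W'.map f) := by
  induction h with
  | rel _ _ hstep => exact .rel _ _ (hstep.map f)
  | refl => exact .refl _
  | symm _ _ _ ih => exact .symm _ _ ih
  | trans _ _ _ _ _ ih₁ ih₂ => exact .trans _ _ _ ih₁ ih₂

end map

section projection

variable {G : SimpleGraph α} {H : SimpleGraph β}

def tensorFst : tensor G H →g G := ⟨Prod.fst, And.left⟩

def tensorSnd : tensor G H →g H := ⟨Prod.snd, And.right⟩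

theorem projG_eq_map {x y : α × β} (W : (tensor G H).Walk x y) : projG W = W.map tensorFst := by
  induction W with
  | nil => rfl
  | cons _ _ ih => simp only [projG, Walk.map_cons, ih]; rfl

theorem projH_eq_map {x y : α × β} (W : (tensor G H).Walk x y) : projH W = W.map tensorSnd := by
  induction W with
  | nil => rfl
  | cons _ _ ih => simp only [projH, Walk.map_cons, ih]; rfl

end projection

/-- square-equivalence in the tensor product projects to
square-equivalence in each factor. -/
theorem sqEquiv_proj {G : SimpleGraph α} {H : SimpleGraph β} {x y : α × β}
    (W W' : (tensor G H).Walk x y) (h : SqEquiv (tensor G H) W W') :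
    SqEquiv G (projG W) (projG W') ∧ SqEquiv H (projH W) (projH W') := by
  simp only [projG_eq_map, projH_eq_map]
  exact ⟨h.map tensorFst, h.map tensorSnd⟩
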